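/- The Thue–Morse word avoids overlaps: there is no pair of finite words x, y with x nonempty such that xyxyx is a factor of the Thue–Morse word. -/

import Mathlib

open Fin.NatCast in
/-- The Thue–Morse sequence: `tm n` is the parity of the number of 1s in the
binary expansion of `n`. -/
def tmWord (n : ℕ) : Fin 2 := ((Nat.digits 2 n).count 1 : ℕ)

lemma tm_even (m : ℕ) : tmWord (2 * m) = tmWord m := by
  rcases Nat.eq_zero_or_pos m with rfl | hm
  · rfl
  · unfold tmWord
    rw [Nat.digits_def' (by norm_num : 1 < 2) (by omega)]
    simp [Nat.mul_div_cancel_left]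

lemma tm_odd (m : ℕ) : tmWord (2 * m + 1) = tmWord m + 1 := by
  unfold tmWord
  rw [Nat.digits_def' (by norm_num : 1 < 2) (by omega)]
  rw [show (2 * m + 1) % 2 = 1 by omega, show (2 * m + 1) / 2 = m by omega]
  simp [List.count_cons]
  exact Fin.ext (by simp [Fin.val_add, Fin.val_natCast, Nat.add_mod])

lemma fin2_ne : ∀ x : Fin 2, x ≠ x + 1 := by decide

lemma fin2_add : ∀ x : Fin 2, x + 1 + 1 = x := by decide

/-- no factor `aaa` pattern: three equal-spaced-by-1 equal values impossible -/
lemma no3 (u : ℕ) (h1 : tmWord u = tmWord (u + 1)) (h2 : tmWord (u + 1) = tmWord (u + 2)) :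
    False := by
  rcases Nat.even_or_odd u with ⟨m, hm⟩ | ⟨m, hm⟩
  · rw [show u = 2 * m by omega, show 2 * m + 1 = 2 * m + 1 from rfl] at h1
    rw [tm_even, tm_odd] at h1
    exact fin2_ne _ h1
  · rw [show u + 1 = 2 * (m + 1) by omega, show u + 2 = 2 * (m + 1) + 1 by omega] at h2
    rw [tm_even, tm_odd] at h2
    exact fin2_ne _ h2

lemma noOverlap : ∀ p, 1 ≤ p → ∀ s, ¬ (∀ i ≤ p, tmWord (s + i) = tmWord (s + p + i)) := by
  intro p
  induction p using Nat.strong_induction_on with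
  | _ p IH =>
    intro hp s h
    have h' : ∀ n, s ≤ n → n ≤ s + p → tmWord n = tmWord (n + p) := by
      intro n h1 h2
      have := h (n - s) (by omega)
      rwa [show s + (n - s) = n by omega, show s + p + (n - s) = n + p by omega] at this
    rcases Nat.even_or_odd p with ⟨q, hq⟩ | ⟨q, hq⟩
    · -- p even, p = 2q, q ≥ 1
      have hq1 : 1 ≤ q := by omega
      apply IH q (by omega) hq1 (s / 2)
      intro i hi
      rcases Nat.even_or_odd s with ⟨r, hr⟩ | ⟨r, hr⟩
      · rw [show s / 2 = r by omega]
        have := h' (2 * (r + i)) (by omega) (by omega)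
        rwa [tm_even, show 2 * (r + i) + p = 2 * (r + q + i) by omega, tm_even] at this
      · rw [show s / 2 = r by omega]
        have := h' (2 * (r + i) + 1) (by omega) (by omega)
        rw [tm_odd, show 2 * (r + i) + 1 + p = 2 * (r + q + i) + 1 by omega, tm_odd] at this
        exact add_right_cancel this
    · -- p odd, p = 2q+1
      rcases Nat.eq_zero_or_pos q with rfl | hq1
      · -- p = 1
        have h0 := h' s (le_refl s) (by omega)
        have h1 := h' (s + 1) (by omega) (by omega)
        rw [hq] at h0 h1
        exact no3 s h0 h1
      · -- p ≥ 3
        have step : ∀ m, s ≤ 2 * m → 2 * m + 1 ≤ s + p →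
            tmWord (m + q) = tmWord (m + q + 1) := by
          intro m hm1 hm2
          have e1 := h' (2 * m) hm1 (by omega)
          have e2 := h' (2 * m + 1) (by omega) hm2
          rw [tm_even, show 2 * m + p = 2 * (m + q) + 1 by omega, tm_odd] at e1
          rw [tm_odd, show 2 * m + 1 + p = 2 * (m + q + 1) by omega, tm_even] at e2
          -- e1 : t m = t (m+q) + 1 ; e2 : t m + 1 = t (m+q+1)
          rw [e1, fin2_add] at e2
          exact e2
        by_cases hc : 2 * ((s + 1) / 2) + 3 ≤ s + p
        · set m0 := (s + 1) / 2 with hm0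
          have s1 := step m0 (by omega) (by omega)
          have s2 := step (m0 + 1) (by omega) (by omega)
          rw [show m0 + 1 + q = m0 + q + 1 by omega, show m0 + q + 1 + 1 = m0 + q + 2 by omega] at s2
          exact no3 (m0 + q) s1 s2
        · -- then q = 1 and s odd
          have hq2 : q = 1 := by omega
          obtain ⟨r, rfl⟩ : ∃ r, s = 2 * r + 1 := ⟨s / 2, by omega⟩
          have e1 := h' (2 * r + 2) (by omega) (by omega)
          have e2 := h' (2 * r + 3) (by omega) (by omega)
          have e3 := h' (2 * r + 4) (by omega) (by omega)
          rw [hq, hq2] at e1 e2 e3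
          rw [show 2 * r + 2 = 2 * (r + 1) by omega, tm_even,
            show 2 * (r + 1) + (2 * 1 + 1) = 2 * (r + 2) + 1 by omega, tm_odd] at e1
          rw [show 2 * r + 3 = 2 * (r + 1) + 1 by omega, tm_odd,
            show 2 * (r + 1) + 1 + (2 * 1 + 1) = 2 * (r + 3) by omega, tm_even] at e2
          rw [show 2 * r + 4 = 2 * (r + 2) by omega, tm_even,
            show 2 * (r + 2) + (2 * 1 + 1) = 2 * (r + 3) + 1 by omega, tm_odd] at e3
          -- e1 : t(r+1) = t(r+2)+1 ; e2 : t(r+1)+1 = t(r+3) ; e3 : t(r+2) = t(r+3)+1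
          rw [e3, fin2_add] at e1
          rw [e1] at e2
          exact fin2_ne _ e2.symm

lemma getElem_idx {α : Type*} (l : List α) {i j : ℕ} (h : i = j) {hi : i < l.length} :
    l[i]'hi = l[j]'(h ▸ hi) := by subst h; rfl

lemma aux_period (x y : List (Fin 2)) (hx : 1 ≤ x.length) (i : ℕ)
    (hi : i ≤ x.length + y.length) :
    ((x ++ y) ++ ((x ++ y) ++ x))[i]'(by simp only [List.length_append]; omega) =
      ((x ++ y) ++ ((x ++ y) ++ x))[x.length + y.length + i]'
        (by simp only [List.length_append]; omega) := by
  have hul : (x ++ y).length = x.length + y.length := List.length_append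
  have hl : ((x ++ y) ++ ((x ++ y) ++ x)).length = 3 * x.length + 2 * y.length := by
    simp only [List.length_append]; omega
  have key : ((x ++ y) ++ ((x ++ y) ++ x))[x.length + y.length + i]'(by omega) =
      ((x ++ y) ++ x)[i]'(by simp only [List.length_append]; omega) :=
    (List.getElem_append_right (as := x ++ y) (bs := (x ++ y) ++ x)
      (i := x.length + y.length + i) (by omega)).trans
      (getElem_idx _ (by omega))
  rcases lt_or_eq_of_le hi with hlt | heq
  · exact ((List.getElem_append_left (as := x ++ y) (bs := (x ++ y) ++ x) (by omega)).trans
      (List.getElem_append_left (as := x ++ y) (bs := x) (by omega)).symm).trans key.symm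
  · -- i = x.length + y.length
    have e2 : ((x ++ y) ++ ((x ++ y) ++ x))[i]'(by omega) =
        ((x ++ y) ++ x)[0]'(by simp only [List.length_append]; omega) :=
      (List.getElem_append_right (as := x ++ y) (bs := (x ++ y) ++ x)
        (i := i) (by omega)).trans (getElem_idx _ (by omega))
    have e3 : ((x ++ y) ++ x)[0]'(by simp only [List.length_append]; omega) =
        x[0]'(by omega) :=
      (List.getElem_append_left (as := x ++ y) (by omega)).trans
        (List.getElem_append_left (as := x) (by omega))
    have e1 : ((x ++ y) ++ x)[i]'(by simp only [List.length_append]; omega) =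
        x[0]'(by omega) :=
      (List.getElem_append_right (as := x ++ y) (bs := x)
        (i := i) (by omega)).trans (getElem_idx _ (by omega))
    exact ((e2.trans e3).trans e1.symm).trans key.symm

theorem stmt_4 :
    ¬ ∃ (x y : List (Fin 2)) (s : ℕ), x ≠ [] ∧
      (List.range (3 * x.length + 2 * y.length)).map (fun n => tmWord (s + n)) =
        x ++ y ++ x ++ y ++ x := by
  rintro ⟨x, y, s, hx, h⟩
  have hM : 1 ≤ x.length := List.length_pos_iff.mpr hx
  have hW2 : x ++ y ++ x ++ y ++ x = (x ++ y) ++ ((x ++ y) ++ x) := by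
    simp [List.append_assoc]
  rw [hW2] at h
  have hval : ∀ i (hi : i < 3 * x.length + 2 * y.length),
      tmWord (s + i) = ((x ++ y) ++ ((x ++ y) ++ x))[i]'
        (by simp only [List.length_append]; omega) := by
    intro i hi
    have e := List.getElem_of_eq h (i := i) (by simpa using hi)
    simpa using e
  apply noOverlap (x.length + y.length) (by omega) s
  intro i hi
  rw [hval i (by omega),
    show s + (x.length + y.length) + i = s + (x.length + y.length + i) by omega,
    hval (x.length + y.length + i) (by omega)]
  exact aux_period x y hM i hi
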